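/- Consider the Misra–Gries frequent-items algorithm with k counters run on a stream of n items: when an item arrives, if it matches a stored entry that entry's counter is incremented; else if some counter is 0 (or an entry slot is free) the item is stored with counter 1; else all k counters are decremented by 1. At the end, every item whose true frequency in the stream exceeds n/(k+1) is stored in one of the entries. -/
import Mathlib

open Finsupp

variable {α : Type*} [DecidableEq α]

/-- One step of the Misra–Gries algorithm with `k` counters: on arrival of `x`,
increment `x`'s counter if it is stored (or a slot is free), otherwise decrement
all counters. -/
noncomputable def mgStep (k : ℕ) (s : α →₀ ℕ) (x : α) : α →₀ ℕ :=
  if 0 < s x ∨ s.support.card < k then s.update x (s x + 1)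
  else Finsupp.mapRange (· - 1) (by simp) s

/-- Running the Misra–Gries algorithm with `k` counters on a stream. -/
noncomputable def mgRun (k : ℕ) (stream : List α) : α →₀ ℕ :=
  stream.foldl (mgStep k) 0

lemma mg_update_eq (s : α →₀ ℕ) (a : α) :
    s.update a (s a + 1) = s + Finsupp.single a 1 := by
  ext b
  by_cases h : b = a
  · simp [h]
  · simp [h, Finsupp.single_apply, if_neg (fun hh : a = b => h hh.symm)]

lemma mg_sum_update (s : α →₀ ℕ) (a : α) :
    (s.update a (s a + 1)).sum (fun _ v => v) = s.sum (fun _ v => v) + 1 := by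
  rw [mg_update_eq, Finsupp.sum_add_index' (fun _ => rfl) (fun _ _ _ => rfl),
    Finsupp.sum_single_index rfl]

set_option linter.unusedSectionVars false in
lemma mg_sum_mapRange (s : α →₀ ℕ) :
    (Finsupp.mapRange (· - 1) (by simp) s).sum (fun _ v => v) + s.support.card
      = s.sum (fun _ v => v) := by
  rw [Finsupp.sum_of_support_subset _ (Finsupp.support_mapRange) _ (by simp)]
  simp only [Finsupp.mapRange_apply]
  rw [Finset.card_eq_sum_ones, ← Finset.sum_add_distrib]
  apply Finset.sum_congr rfl
  intro a ha
  have : s a ≠ 0 := Finsupp.mem_support_iff.mp ha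
  dsimp only
  omega

lemma mg_inv (k : ℕ) (x : α) (l : List α) : ∃ D : ℕ,
    l.count x ≤ (mgRun k l) x + D ∧
    (mgRun k l).sum (fun _ v => v) + (k + 1) * D ≤ l.length := by
  induction l using List.reverseRecOn with
  | nil => exact ⟨0, by simp [mgRun]⟩
  | append_singleton l a ih =>
    obtain ⟨D, h1, h2⟩ := ih
    have hrun : mgRun k (l ++ [a]) = mgStep k (mgRun k l) a := by
      simp [mgRun, List.foldl_append]
    set s := mgRun k l with hs
    rw [hrun]
    unfold mgStep
    by_cases hc : 0 < s a ∨ s.support.card < k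
    · rw [if_pos hc]
      refine ⟨D, ?_, ?_⟩
      · have hx : (s.update a (s a + 1)) x = s x + if a = x then 1 else 0 := by
          rw [mg_update_eq]
          by_cases h : a = x <;> simp [h, Finsupp.single_apply]
        rw [hx, List.count_append]
        simp only [List.count_singleton']
        omega
      · rw [mg_sum_update]
        simp only [List.length_append, List.length_singleton]
        omega
    · rw [if_neg hc]
      push_neg at hc
      obtain ⟨hsa, hcard⟩ := hc
      have hsa0 : s a = 0 := by omega
      refine ⟨D + 1, ?_, ?_⟩
      · have hx : s x ≤ (Finsupp.mapRange (· - 1) (by simp) s) x + 1 := by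
          rw [Finsupp.mapRange_apply]; omega
        rw [List.count_append]
        simp only [List.count_singleton']
        by_cases h : a = x
        · subst h
          have : s a = 0 := hsa0
          rw [Finsupp.mapRange_apply, this]
          simp only [if_pos rfl, if_true]
          omega
        · simp only [if_neg h]
          omega
      · have := mg_sum_mapRange s
        simp only [List.length_append, List.length_singleton]
        have hk : k ≤ s.support.card := hcard
        have hm : (k + 1) * (D + 1) = (k + 1) * D + (k + 1) := by ring
        omega

theorem stmt9 (k : ℕ) (stream : List α) (x : α)
    (hfreq : (stream.length : ℝ) / (k + 1) < (stream.count x : ℝ)) :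
    0 < mgRun k stream x := by
  by_contra h
  push_neg at h
  have hx0 : mgRun k stream x = 0 := Nat.le_zero.mp h
  obtain ⟨D, h1, h2⟩ := mg_inv k x stream
  rw [hx0, Nat.zero_add] at h1
  have hn : (k + 1) * stream.count x ≤ stream.length := by
    calc (k + 1) * stream.count x ≤ (k + 1) * D := Nat.mul_le_mul_left _ h1
      _ ≤ stream.length := by omega
  have hk : (0 : ℝ) < (k : ℝ) + 1 := by positivity
  rw [div_lt_iff₀ hk] at hfreq
  have : (stream.length : ℝ) < ((k + 1) * stream.count x : ℕ) := by push_cast; linarith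
  exact absurd hn (by exact_mod_cast not_le.mpr this)
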